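/- arXiv:2511.00885 — 2 statements merged into one kernel-verified Lean document; each statement's English description precedes it below -/
import Mathlib

section
/- Let x, y ∈ ℝ^d and let a, b ∈ ℝ^d with a_j ≤ x_j, y_j ≤ b_j for all j, and Σ_j (b_j − a_j) > 0. Sample a coordinate cut (j, τ) by first picking coordinate j with probability (b_j − a_j)/Σ_{j'}(b_{j'} − a_{j'}), then picking τ uniformly in [a_j, b_j]. Then the probability that the cut separates x and y (i.e., exactly one of x_j ≤ τ, y_j ≤ τ holds) equals ‖x − y‖₁ / ‖b − a‖₁. -/
open MeasureTheory

theorem stmt12 {d : ℕ} (x y a b : Fin d → ℝ)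
    (hax : ∀ j, a j ≤ x j) (hxb : ∀ j, x j ≤ b j)
    (hay : ∀ j, a j ≤ y j) (hyb : ∀ j, y j ≤ b j)
    (hpos : 0 < ∑ j, (b j - a j)) :
    ∑ j, ((b j - a j) / ∑ j', (b j' - a j')) *
        ((volume (Set.Ioo (min (x j) (y j)) (max (x j) (y j)))).toReal / (b j - a j)) =
      (∑ j, |x j - y j|) / (∑ j, (b j - a j)) := by
  rw [Finset.sum_div]
  apply Finset.sum_congr rfl
  intro j _
  have hvol : (volume (Set.Ioo (min (x j) (y j)) (max (x j) (y j)))).toReal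
      = |x j - y j| := by
    rw [Real.volume_Ioo, ENNReal.toReal_ofReal (by simp [sub_nonneg])]
    rw [max_sub_min_eq_abs, abs_sub_comm]
  rw [hvol]
  rcases eq_or_lt_of_le (sub_nonneg.mpr ((hax j).trans (hxb j))) with h | h
  · have hxy : x j = y j := le_antisymm
      (le_trans (hxb j) (by linarith [hay j] : b j ≤ y j))
      (le_trans (hyb j) (by linarith [hax j] : b j ≤ x j))
    simp [hxy, ← h]
  · rw [div_mul_div_comm, mul_comm (b j - a j), mul_div_mul_right _ _ h.ne']
end

section
/- Mistake-cut ratio bound (core of the modified IMM analysis): Let Y ⊂ ℝ^d be a finite set containing points X' and centroids M' with a map c : X' → M'. Suppose all points of Y lie in a box ×_j [a_j, b_j] with ‖b−a‖₁ > 0, and let μ', μ'' ∈ M' be distinct. Then there exists a coordinate cut (j, τ) with τ ∈ [a_j, b_j] that separates μ' and μ'' such that the number of x ∈ X' separated from c(x) by the cut is at most (Σ_{x∈X'} ‖x − c(x)‖₁) / ‖μ' − μ''‖₁, provided ‖μ' − μ''‖₁ > 0. -/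
/-!
Weight a cut `(j, τ)` by counting measure on `j` and Lebesgue measure on `τ`: the cuts separating
`u` and `v` then have total weight `‖u - v‖₁` (this is the random cut distribution of the paper
before normalisation by `‖b - a‖₁`, which cancels). The number of mistakes of a cut therefore
integrates to `∑ₓ ‖x - c(x)‖₁`, while the cuts separating `μ'` and `μ''` have weight
`‖μ' - μ''‖₁`, so by the first moment method one of the latter makes at most the ratio of mistakes.
Such a cut has its threshold between `μ'ⱼ` and `μ''ⱼ`, hence inside the box.
-/

open MeasureTheory Set
open scoped ENNReal symmDiff Finset

namespace CoordinateCut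

section

variable {κ ι : Type*}

def separatingCuts (u v : κ → ℝ) : Set (κ × ℝ) :=
  {q | u q.1 ≤ q.2} ∆ {q | v q.1 ≤ q.2}

theorem mem_separatingCuts {u v : κ → ℝ} {q : κ × ℝ} :
    q ∈ separatingCuts u v ↔ Xor (u q.1 ≤ q.2) (v q.1 ≤ q.2) :=
  Iff.rfl

theorem prodMk_preimage_separatingCuts (u v : κ → ℝ) (j : κ) :
    Prod.mk j ⁻¹' separatingCuts u v = Ico (min (u j) (v j)) (max (u j) (v j)) := by
  ext τ
  simp only [mem_preimage, mem_separatingCuts, mem_Ico, min_le_iff, lt_max_iff, Xor]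
  constructor <;> intro h <;> rcases le_total (u j) (v j) <;> grind

theorem card_separated_eq_sum_indicator (X : Finset ι) (p c : ι → κ → ℝ) (q : κ × ℝ) :
    (#{i ∈ X | Xor (p i q.1 ≤ q.2) (c i q.1 ≤ q.2)} : ℝ≥0∞) =
      ∑ i ∈ X, (separatingCuts (p i) (c i)).indicator 1 q := by
  rw [Finset.natCast_card_filter]
  exact Finset.sum_congr rfl fun i _ => by simp only [indicator, mem_separatingCuts, Pi.one_apply]

end

variable {κ ι : Type*} [Fintype κ] [MeasurableSpace κ] [MeasurableSingletonClass κ]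

noncomputable def cutMeasure (κ : Type*) [MeasurableSpace κ] : Measure (κ × ℝ) :=
  Measure.count.prod volume

theorem measurableSet_separatingCuts (u v : κ → ℝ) : MeasurableSet (separatingCuts u v) := by
  have hle : ∀ w : κ → ℝ, MeasurableSet {q : κ × ℝ | w q.1 ≤ q.2} := fun w =>
    measurableSet_le ((measurable_of_finite w).comp measurable_fst) measurable_snd
  exact (hle u).symmDiff (hle v)

theorem cutMeasure_separatingCuts (u v : κ → ℝ) :
    cutMeasure κ (separatingCuts u v) = ENNReal.ofReal (∑ j, |u j - v j|) := by
  rw [cutMeasure, Measure.prod_apply (measurableSet_separatingCuts u v), lintegral_count,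
    tsum_fintype, ENNReal.ofReal_sum_of_nonneg fun j _ => abs_nonneg _]
  refine Finset.sum_congr rfl fun j _ => ?_
  rw [prodMk_preimage_separatingCuts, Real.volume_Ico, max_sub_min_eq_abs, abs_sub_comm]

theorem measurable_card_separated (X : Finset ι) (p c : ι → κ → ℝ) :
    Measurable fun q : κ × ℝ => (#{i ∈ X | Xor (p i q.1 ≤ q.2) (c i q.1 ≤ q.2)} : ℝ≥0∞) := by
  simp_rw [card_separated_eq_sum_indicator]
  exact Finset.measurable_sum _ fun i _ =>
    measurable_one.indicator (measurableSet_separatingCuts _ _)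

theorem lintegral_card_separated (X : Finset ι) (p c : ι → κ → ℝ) :
    ∫⁻ q, (#{i ∈ X | Xor (p i q.1 ≤ q.2) (c i q.1 ≤ q.2)} : ℝ≥0∞) ∂cutMeasure κ =
      ENNReal.ofReal (∑ i ∈ X, ∑ j, |p i j - c i j|) := by
  simp_rw [card_separated_eq_sum_indicator]
  rw [lintegral_finsetSum _ fun i _ => measurable_one.indicator (measurableSet_separatingCuts _ _),
    ENNReal.ofReal_sum_of_nonneg fun i _ => Finset.sum_nonneg fun j _ => abs_nonneg _]
  refine Finset.sum_congr rfl fun i _ => ?_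
  rw [lintegral_indicator_one (measurableSet_separatingCuts _ _), cutMeasure_separatingCuts]

theorem exists_mem_separatingCuts_card_separated_le (X : Finset ι) (p c : ι → κ → ℝ)
    {u v : κ → ℝ} (huv : 0 < ∑ j, |u j - v j|) :
    ∃ q ∈ separatingCuts u v, (#{i ∈ X | Xor (p i q.1 ≤ q.2) (c i q.1 ≤ q.2)} : ℝ) ≤
      (∑ i ∈ X, ∑ j, |p i j - c i j|) / ∑ j, |u j - v j| := by
  have hpos : cutMeasure κ (separatingCuts u v) ≠ 0 := by
    simpa [cutMeasure_separatingCuts] using huv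
  obtain ⟨q, hq, hle⟩ := exists_le_setLAverage hpos (by simp [cutMeasure_separatingCuts])
    (measurable_card_separated X p c).aemeasurable
  refine ⟨q, hq, ?_⟩
  have hA : 0 ≤ ∑ i ∈ X, ∑ j, |p i j - c i j| :=
    Finset.sum_nonneg fun i _ => Finset.sum_nonneg fun j _ => abs_nonneg _
  rw [← ENNReal.ofReal_le_ofReal_iff (div_nonneg hA huv.le), ENNReal.ofReal_natCast,
    ENNReal.ofReal_div_of_pos huv, ← lintegral_card_separated, ← cutMeasure_separatingCuts]
  calc _ ≤ _ := hle
    _ ≤ _ := by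
      rw [setLAverage_eq]
      exact ENNReal.div_le_div_right (setLIntegral_le_lintegral _ _) _

end CoordinateCut

theorem stmt17_general {dim : ℕ} {ι : Type*}
    (X' : Finset ι) (p c : ι → Fin dim → ℝ)
    (μ' μ'' : Fin dim → ℝ)
    (a b : Fin dim → ℝ)
    (hbox : ∀ j, (∀ i ∈ X', a j ≤ p i j ∧ p i j ≤ b j ∧ a j ≤ c i j ∧ c i j ≤ b j) ∧
      a j ≤ μ' j ∧ μ' j ≤ b j ∧ a j ≤ μ'' j ∧ μ'' j ≤ b j)
    (hμ : 0 < ∑ j, |μ' j - μ'' j|) :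
    ∃ (j : Fin dim) (τ : ℝ), τ ∈ Set.Icc (a j) (b j) ∧
      Xor' (μ' j ≤ τ) (μ'' j ≤ τ) ∧
      ((X'.filter (fun i => Xor (p i j ≤ τ) (c i j ≤ τ))).card : ℝ) ≤
        (∑ i ∈ X', ∑ j', |p i j' - c i j'|) / (∑ j', |μ' j' - μ'' j'|) := by
  obtain ⟨⟨j, τ⟩, hsep, hcard⟩ :=
    CoordinateCut.exists_mem_separatingCuts_card_separated_le X' p c hμ
  obtain ⟨-, haμ', hμ'b, haμ'', hμ''b⟩ := hbox j
  have hτ : τ ∈ Ico (min (μ' j) (μ'' j)) (max (μ' j) (μ'' j)) := by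
    rwa [← CoordinateCut.prodMk_preimage_separatingCuts]
  exact ⟨j, τ, ⟨(le_min haμ' haμ'').trans hτ.1, hτ.2.le.trans (max_le hμ'b hμ''b)⟩, hsep, hcard⟩

theorem stmt17 {dim : ℕ} {ι : Type*}
    (X' : Finset ι) (p c : ι → Fin dim → ℝ)
    (μ' μ'' : Fin dim → ℝ) (hμne : μ' ≠ μ'')
    (a b : Fin dim → ℝ)
    (hbox : ∀ j, (∀ i ∈ X', a j ≤ p i j ∧ p i j ≤ b j ∧ a j ≤ c i j ∧ c i j ≤ b j) ∧
      a j ≤ μ' j ∧ μ' j ≤ b j ∧ a j ≤ μ'' j ∧ μ'' j ≤ b j)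
    (hba : 0 < ∑ j, (b j - a j))
    (hμ : 0 < ∑ j, |μ' j - μ'' j|) :
    ∃ (j : Fin dim) (τ : ℝ), τ ∈ Set.Icc (a j) (b j) ∧
      Xor' (μ' j ≤ τ) (μ'' j ≤ τ) ∧
      ((X'.filter (fun i => Xor (p i j ≤ τ) (c i j ≤ τ))).card : ℝ) ≤
        (∑ i ∈ X', ∑ j', |p i j' - c i j'|) / (∑ j', |μ' j' - μ'' j'|) :=
  stmt17_general X' p c μ' μ'' a b hbox hμ
end
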